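/- Let p ≥ 1, N ≥ 2p−1, and let a_0,…,a_N : I → ℂ be differentiable nowhere-vanishing functions on an interval I solving the finite Bogoyavlensky lattice a_i' = a_i(∏_{j=1}^p a_{i+j} − ∏_{j=1}^p a_{i−j}) for i = 0,…,N (with a_l ≡ 0 for l < 0 and l > N). Let S_k^m(t) := (L1_N(t)^k)_{m−1,0}. For 1 ≤ l ≤ p set k_l = ⌊(N+1+l)/p⌋, m_l = ((N+1+l) mod p)+1, and for 0 ≤ v ≤ N+1 set k̂_v = ⌊(N+l−v)/p⌋, m̂_v = ((N+l−v) mod p)+1. Suppose D_0,…,D_{N+1} : I → ℂ are differentiable and satisfy S_{k_l+k}^{m_l}(t) = Σ_{v=0}^{N+1} D_v(t)·S_{k̂_v+k}^{m̂_v}(t) for all integers k ≥ 0, all 1 ≤ l ≤ p, and all t ∈ I, and suppose Δ_{N+1}(t) ≠ 0 for all t ∈ I, where Δ_{N+1}(t) = det(α_{ij}(t))_{i,j=0}^{N+1} with α_{ij} = S_{⌊i/p⌋+j}^{(i mod p)+1}. Then each D_v is constant on I (i.e., D_0,…,D_{N+1} are first integrals of the lattice). -/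

import Mathlib

open scoped BigOperators

noncomputable section

/-- The `(N+2)×(N+2)` matrix `L1_N`: `(L1_N)_{i,i+p} = 1`, `(L1_N)_{i+1,i} = a_i`,
all other entries zero. -/
def L1N (p N : ℕ) (a : ℕ → ℂ) : Matrix (Fin (N + 2)) (Fin (N + 2)) ℂ :=
  Matrix.of fun i j => if (j : ℕ) = (i : ℕ) + p then 1
    else if (i : ℕ) = (j : ℕ) + 1 then a (j : ℕ) else 0

/-- The moments of `L1_N`: `S_k^m = (L1_N^k)_{m−1,0}`. -/
def momL1N (p N : ℕ) (a : ℕ → ℂ) (k m : ℕ) : ℂ :=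
  (L1N p N a ^ k) (Fin.ofNat (N + 2) (m - 1 : ℕ)) (Fin.ofNat (N + 2) (0 : ℕ))

open Finset Matrix

/-!
Along the lattice flow `L1_N` satisfies the Lax equation `L' = [L, M]`, where `M` lives on the
`(p+1)`-th subdiagonal with entries `a_j a_{j+1} ⋯ a_{j+p}`. Indexing the moments by
`n = pk + m - 1`, i.e. `S(n) = S_{⌊n/p⌋}^{(n mod p)+1}`, this gives
`S(n)' = S(n + p(p+1)) - a_0 ⋯ a_{p-1} S(n)`. The hypothesis on the `D_v` is the linear recurrence
`S(n) = ∑_v D_v S(n-1-v)` for `n ≥ N+2`, and the derivative rule maps this recurrence to itself,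
so differentiating it leaves `∑_v D_v' S(n-1-v) = 0` for `n ≥ N+2`. For `n = N+2+pj` this says
that `(D_{N+1-i}')_i` lies in the left kernel of `(α_{ij})`, which is trivial as `Δ_{N+1} ≠ 0`.
-/

theorem Matrix.hasDerivWithinAt_pow_apply_of_lax {n 𝔸 : Type*} [Fintype n] [DecidableEq n]
    [NormedCommRing 𝔸] [NormedAlgebra ℝ 𝔸] {L : ℝ → Matrix n n 𝔸} {M : Matrix n n 𝔸}
    {s : Set ℝ} {x : ℝ}
    (hL : ∀ i j, HasDerivWithinAt (fun t => L t i j) ((L x * M - M * L x) i j) s x) (k : ℕ) :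
    ∀ i j, HasDerivWithinAt (fun t => (L t ^ k) i j) ((L x ^ k * M - M * L x ^ k) i j) s x := by
  induction k with
  | zero =>
    intro i j
    simpa using hasDerivWithinAt_const x s ((1 : Matrix n n 𝔸) i j)
  | succ k ih =>
    intro i j
    have hprod : (L x ^ (k + 1) * M - M * L x ^ (k + 1)) =
        (L x ^ k * M - M * L x ^ k) * L x + L x ^ k * (L x * M - M * L x) := by
      rw [pow_succ]; noncomm_ring
    have hfun : (fun t => (L t ^ (k + 1)) i j) = fun t => ∑ m, (L t ^ k) i m * L t m j := by
      funext t; rw [pow_succ, Matrix.mul_apply]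
    rw [hfun, hprod, Matrix.add_apply, Matrix.mul_apply, Matrix.mul_apply, ← sum_add_distrib]
    exact HasDerivWithinAt.fun_sum fun m _ => (ih i m).mul (hL m j)

theorem Set.OrdConnected.eq_of_hasDerivWithinAt_zero {E : Type*} [NormedAddCommGroup E]
    [NormedSpace ℝ E] {I : Set ℝ} {f : ℝ → E} (hI : I.OrdConnected)
    (hf : ∀ x ∈ I, UniqueDiffWithinAt ℝ I x → HasDerivWithinAt f 0 I x)
    {t s : ℝ} (ht : t ∈ I) (hs : s ∈ I) : f t = f s := by
  wlog hts : t < s generalizing t s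
  · rcases (not_lt.mp hts).eq_or_lt with h | h
    · rw [h]
    · exact (this hs ht h).symm
  have hsub : Set.Icc t s ⊆ I := hI.out ht hs
  have hderiv : ∀ x ∈ Set.Icc t s, HasDerivWithinAt f 0 (Set.Icc t s) x := fun x hx =>
    (hf x (hsub hx) ((uniqueDiffOn_Icc hts x hx).mono hsub)).mono hsub
  refine (constant_of_has_deriv_right_zero (fun x hx => (hderiv x hx).continuousWithinAt)
    (fun x hx => ?_) s (Set.right_mem_Icc.mpr hts.le)).symm
  exact (hderiv x (Set.mem_Icc_of_Ico hx)).mono_of_mem_nhdsWithin (Icc_mem_nhdsGE_of_mem hx)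

theorem sum_mul_eq_zero_of_hasDerivWithinAt_of_recurrence {𝔸 : Type*} [NormedCommRing 𝔸]
    [NormedAlgebra ℝ 𝔸] {I : Set ℝ} {x : ℝ} (hx : x ∈ I) (hu : UniqueDiffWithinAt ℝ I x)
    {K c : ℕ} {S : ℝ → ℕ → 𝔸} {D : ℕ → ℝ → 𝔸} {D' : ℕ → 𝔸} {P : 𝔸}
    (hrec : ∀ t ∈ I, ∀ n, K ≤ n → S t n = ∑ w ∈ range K, D w t * S t (n - 1 - w))
    (hS : ∀ n, HasDerivWithinAt (fun t => S t n) (S x (n + c) - P * S x n) I x)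
    (hD : ∀ w < K, HasDerivWithinAt (D w) (D' w) I x) {n : ℕ} (hn : K ≤ n) :
    ∑ w ∈ range K, D' w * S x (n - 1 - w) = 0 := by
  have hsum : HasDerivWithinAt (fun t => ∑ w ∈ range K, D w t * S t (n - 1 - w))
      (∑ w ∈ range K, (D' w * S x (n - 1 - w) +
        D w x * (S x (n + c - 1 - w) - P * S x (n - 1 - w)))) I x := by
    refine HasDerivWithinAt.fun_sum fun w hw => ?_
    have hwK := mem_range.mp hw
    have hidx : n - 1 - w + c = n + c - 1 - w := by omega
    exact (hD w hwK).mul (hidx ▸ hS (n - 1 - w))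
  have hrec_n := hrec x hx n hn
  have hrec_nc := hrec x hx (n + c) (by omega)
  have heq := hu.eq_deriv _ hsum
    ((hS n).congr (fun t ht => (hrec t ht n hn).symm) hrec_n.symm)
  simp only [mul_sub, sum_add_distrib, sum_sub_distrib] at heq
  rw [← hrec_nc] at heq
  simp only [mul_left_comm _ P, ← mul_sum, ← hrec_n] at heq
  linear_combination heq

theorem eq_zero_of_sum_mul_eq_zero_of_det_ne_zero {𝕜 : Type*} [Field 𝕜] {K p : ℕ}
    {S g : ℕ → 𝕜} (hdet : (Matrix.of fun i j : Fin K => S (i + p * j)).det ≠ 0)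
    (hg : ∀ n, K ≤ n → ∑ w ∈ range K, g w * S (n - 1 - w) = 0) {w : ℕ} (hw : w < K) :
    g w = 0 := by
  set v : Fin K → 𝕜 := fun i => g (K - 1 - i)
  have hv : v ᵥ* Matrix.of (fun i j : Fin K => S (i + p * j)) = 0 := by
    funext j
    simp only [vecMul, dotProduct, of_apply, Pi.zero_apply, v]
    rw [Fin.sum_univ_eq_sum_range
      (fun i => g (K - 1 - i) * S (i + p * j)), ← sum_range_reflect, ← hg (K + p * j) (by omega)]
    refine sum_congr rfl fun i hi => ?_
    have hiK := mem_range.mp hi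
    congr 3 <;> omega
  have hv0 : v = 0 := by
    by_contra hne
    exact hdet (Matrix.exists_vecMul_eq_zero_iff.mp ⟨v, hne, hv⟩)
  simpa [v, Nat.sub_sub_self (show w ≤ K - 1 by omega)] using congrFun hv0 ⟨K - 1 - w, by omega⟩

theorem Finset.prod_range_succ_eq_mul_prod_Icc {M : Type*} [CommMonoid M] (f : ℕ → M) (n : ℕ) :
    ∏ s ∈ range (n + 1), f s = f 0 * ∏ s ∈ Icc 1 n, f s := by
  rw [prod_range_eq_mul_Ico f (by omega : 0 < n + 1), Ico_add_one_right_eq_Icc]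

section windowProd

variable (p : ℕ) (b : ℤ → ℂ)

def windowProd (z : ℤ) : ℂ := ∏ s ∈ range (p + 1), b (z + s)

theorem windowProd_eq_mul_prod_Icc_add (z : ℤ) :
    windowProd p b z = b z * ∏ s ∈ Icc 1 p, b (z + (s : ℤ)) := by
  simp [windowProd, prod_range_succ_eq_mul_prod_Icc]

theorem windowProd_sub_eq_mul_prod_Icc_sub (z : ℤ) :
    windowProd p b (z - p) = b z * ∏ s ∈ Icc 1 p, b (z - (s : ℤ)) := by
  have hsplit := prod_range_succ_eq_mul_prod_Icc (fun s : ℕ => b (z - s)) p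
  rw [Nat.cast_zero, sub_zero] at hsplit
  rw [← hsplit, ← prod_range_reflect, windowProd]
  refine prod_congr rfl fun s hs => ?_
  rw [show p + 1 - 1 - s = p - s by omega, Nat.cast_sub (by have := mem_range.mp hs; omega)]
  ring_nf

theorem mul_windowProd_eq_mul_windowProd_add_one (z : ℤ) :
    b (z + (p + 1)) * windowProd p b z = b z * windowProd p b (z + 1) := by
  calc b (z + (p + 1)) * windowProd p b z = ∏ s ∈ range (p + 2), b (z + s) := by
        rw [prod_range_succ, windowProd]; push_cast; ring
    _ = b z * windowProd p b (z + 1) := by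
        rw [prod_range_succ', windowProd]; push_cast; ring_nf

end windowProd

def laxM (p N : ℕ) (b : ℤ → ℂ) : Matrix (Fin (N + 2)) (Fin (N + 2)) ℂ :=
  of fun i j => if (i : ℕ) = j + (p + 1) then windowProd p b (j : ℕ) else 0

section Lax

variable {p N : ℕ} (b : ℤ → ℂ)

theorem laxM_mul_apply_of_lt (X : Matrix (Fin (N + 2)) (Fin (N + 2)) ℂ) {i : Fin (N + 2)}
    (hi : (i : ℕ) < p + 1) (j : Fin (N + 2)) : (laxM p N b * X) i j = 0 := by
  rw [mul_apply]
  exact sum_eq_zero fun k _ => by rw [laxM, of_apply, if_neg (by omega), zero_mul]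

theorem L1N_mul_laxM_apply (hb : ∀ l : ℤ, N < l → b l = 0) (i j : Fin (N + 2)) :
    (L1N p N (fun n : ℕ => b n) * laxM p N b) i j =
      (if (i : ℕ) = j + 1 then 1 else if (i : ℕ) = j + (p + 2) then b (j + (p + 1)) else 0) *
        windowProd p b (j : ℕ) := by
  rw [mul_apply]
  by_cases hj : (j : ℕ) + (p + 1) < N + 2
  · rw [Fintype.sum_eq_single ⟨j + (p + 1), hj⟩ fun k hk => ?_]
    · simp only [L1N, laxM, of_apply, if_true]
      split_ifs <;> first | omega | rfl
    · rw [laxM, of_apply, if_neg (fun h => hk (Fin.ext h)), mul_zero]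
  · have hzero : windowProd p b (j : ℕ) = 0 :=
      prod_eq_zero (self_mem_range_succ p) (hb _ (by omega))
    rw [hzero, mul_zero]
    exact sum_eq_zero fun k _ => by rw [laxM, of_apply, if_neg (by omega), mul_zero]

theorem laxM_mul_L1N_apply (hb : ∀ l : ℤ, l < 0 → b l = 0) (i j : Fin (N + 2)) :
    (laxM p N b * L1N p N (fun n : ℕ => b n)) i j =
      if (i : ℕ) = j + 1 then windowProd p b ((j : ℕ) - p)
      else if (i : ℕ) = j + (p + 2) then windowProd p b ((j : ℕ) + 1) * b j else 0 := by
  by_cases hi : p + 1 ≤ (i : ℕ)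
  · rw [mul_apply, Fintype.sum_eq_single ⟨i - (p + 1), by omega⟩ fun k hk => ?_]
    · simp only [L1N, laxM, of_apply]
      rw [if_pos (by omega)]
      split_ifs <;> first | omega | skip
      · rw [mul_one]; congr 1; omega
      · congr 2; omega
      · rw [mul_zero]
    · rw [laxM, of_apply, if_neg (fun h => hk (Fin.ext (by dsimp only; omega))), zero_mul]
  · rw [laxM_mul_apply_of_lt b _ (by omega)]
    split_ifs with h1 h2
    · exact (prod_eq_zero (mem_range.mpr (show p - 1 - j < p + 1 by omega))
        (hb _ (by omega))).symm
    · omega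
    · rfl

theorem L1N_mul_laxM_sub_laxM_mul_L1N_apply (hb : ∀ l : ℤ, l < 0 ∨ N < l → b l = 0)
    (i j : Fin (N + 2)) :
    (L1N p N (fun n : ℕ => b n) * laxM p N b - laxM p N b * L1N p N (fun n : ℕ => b n)) i j =
      if (i : ℕ) = j + 1 then
        b j * (∏ s ∈ Icc 1 p, b (j + (s : ℤ)) - ∏ s ∈ Icc 1 p, b (j - (s : ℤ)))
      else 0 := by
  rw [Matrix.sub_apply, L1N_mul_laxM_apply b (fun l hl => hb l (.inr hl)),
    laxM_mul_L1N_apply b (fun l hl => hb l (.inl hl))]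
  split_ifs
  · rw [windowProd_eq_mul_prod_Icc_add, windowProd_sub_eq_mul_prod_Icc_sub]; ring
  · rw [mul_windowProd_eq_mul_windowProd_add_one]; ring
  · ring

end Lax

def IsBogoyavlenskyFlow (p N : ℕ) (I : Set ℝ) (a : ℤ → ℝ → ℂ) : Prop :=
  (∀ l : ℤ, l < 0 ∨ (N : ℤ) < l → ∀ t : ℝ, a l t = 0) ∧
    ∀ i : ℤ, 0 ≤ i → i ≤ (N : ℤ) → ∀ t ∈ I, HasDerivWithinAt (a i)
      (a i t * (∏ j ∈ Icc 1 p, a (i + (j : ℤ)) t - ∏ j ∈ Icc 1 p, a (i - (j : ℤ)) t)) I t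

theorem IsBogoyavlenskyFlow.hasDerivWithinAt_L1N_apply {p N : ℕ} (hp : 1 ≤ p) {I : Set ℝ}
    {a : ℤ → ℝ → ℂ} (ha : IsBogoyavlenskyFlow p N I a) {x : ℝ} (hx : x ∈ I)
    (i j : Fin (N + 2)) :
    HasDerivWithinAt (fun t => L1N p N (fun n : ℕ => a n t) i j)
      ((L1N p N (fun n : ℕ => a n x) * laxM p N (fun l => a l x) -
        laxM p N (fun l => a l x) * L1N p N (fun n : ℕ => a n x)) i j) I x := by
  rw [L1N_mul_laxM_sub_laxM_mul_L1N_apply _ fun l hl => ha.1 l hl x]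
  simp only [L1N, of_apply]
  split_ifs with h1 h2
  · omega
  · exact hasDerivWithinAt_const x I 1
  · exact ha.2 _ (Int.natCast_nonneg _) (by omega) x hx
  · exact hasDerivWithinAt_const x I 0

section Columns

variable {p N : ℕ}

theorem L1N_pow_apply_zero_of_le (b : ℕ → ℂ) (hpN : p ≤ N) {s : ℕ} (hs : s ≤ p)
    (j : Fin (N + 2)) : (L1N p N b ^ s) j 0 = if (j : ℕ) = s then ∏ i ∈ range s, b i else 0 := by
  induction s generalizing j with
  | zero => simp only [pow_zero, one_apply, Fin.ext_iff, Fin.val_zero, range_zero, prod_empty]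
  | succ q ih =>
    rw [pow_succ', mul_apply, Fintype.sum_eq_single ⟨q, by omega⟩ fun k hk => ?_]
    · rw [ih (by omega), if_pos rfl, prod_range_succ]
      simp only [L1N, of_apply]
      split_ifs <;> first | omega | ring
    · rw [ih (by omega), if_neg (fun h => hk (Fin.ext h)), mul_zero]

theorem L1N_pow_succ_apply_zero (b : ℤ → ℂ) (hpN : p ≤ N) (m : Fin (N + 2)) :
    (L1N p N (fun n : ℕ => b n) ^ (p + 1)) m 0 =
      (if m = 0 then ∏ i ∈ range p, b i else 0) + laxM p N b m 0 := by
  rw [pow_succ', mul_apply, Fintype.sum_eq_single ⟨p, by omega⟩ fun k hk => ?_]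
  · rw [L1N_pow_apply_zero_of_le _ hpN le_rfl, if_pos rfl]
    simp only [L1N, laxM, windowProd, of_apply, Fin.ext_iff, Fin.val_zero, Nat.cast_zero,
      zero_add, prod_range_succ]
    split_ifs <;> first | omega | ring
  · rw [L1N_pow_apply_zero_of_le _ hpN le_rfl, if_neg (fun h => hk (Fin.ext h)), mul_zero]

theorem mul_laxM_apply_zero (b : ℤ → ℂ) (hpN : p ≤ N) (X : Matrix (Fin (N + 2)) (Fin (N + 2)) ℂ)
    (r : Fin (N + 2)) :
    (X * laxM p N b) r 0 =
      (X * L1N p N (fun n : ℕ => b n) ^ (p + 1)) r 0 - (∏ i ∈ range p, b i) * X r 0 := by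
  simp only [mul_apply, L1N_pow_succ_apply_zero b hpN, mul_add, sum_add_distrib, mul_ite,
    mul_zero, Fintype.sum_ite_eq']
  ring

end Columns

def momSeq (p N : ℕ) (b : ℕ → ℂ) (n : ℕ) : ℂ := momL1N p N b (n / p) (n % p + 1)

theorem momL1N_div_add {p : ℕ} (hp : 0 < p) (N : ℕ) (b : ℕ → ℂ) (q k : ℕ) :
    momL1N p N b (q / p + k) (q % p + 1) = momSeq p N b (q + p * k) := by
  rw [momSeq, Nat.add_mul_div_left _ _ hp, Nat.add_mul_mod_self_left]

theorem IsBogoyavlenskyFlow.hasDerivWithinAt_momSeq {p N : ℕ} (hp : 1 ≤ p) (hpN : p ≤ N)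
    {I : Set ℝ} {a : ℤ → ℝ → ℂ} (ha : IsBogoyavlenskyFlow p N I a) {x : ℝ} (hx : x ∈ I)
    (n : ℕ) :
    HasDerivWithinAt (fun t => momSeq p N (fun m : ℕ => a m t) n)
      (momSeq p N (fun m : ℕ => a m x) (n + p * (p + 1)) -
        (∏ i ∈ range p, a i x) * momSeq p N (fun m : ℕ => a m x) n) I x := by
  rw [← momL1N_div_add hp]
  simp only [momSeq, momL1N, Nat.add_sub_cancel, show Fin.ofNat (N + 2) 0 = 0 from rfl]
  set r : Fin (N + 2) := Fin.ofNat (N + 2) (n % p)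
  have hr : (r : ℕ) < p + 1 := by
    rw [Fin.val_ofNat, Nat.mod_eq_of_lt (by have := Nat.mod_lt n hp; omega)]
    have := Nat.mod_lt n hp; omega
  have hlax := Matrix.hasDerivWithinAt_pow_apply_of_lax (ha.hasDerivWithinAt_L1N_apply hp hx)
    (n / p) r 0
  rwa [Matrix.sub_apply, mul_laxM_apply_zero _ hpN, laxM_mul_apply_of_lt _ _ hr, ← pow_add,
    sub_zero] at hlax

theorem momSeq_eq_sum_of_momL1N_eq_sum {p N : ℕ} (hp : 0 < p) {b d : ℕ → ℂ}
    (hrel : ∀ k : ℕ, ∀ l, 1 ≤ l → l ≤ p →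
      momL1N p N b ((N + 1 + l) / p + k) ((N + 1 + l) % p + 1) =
        ∑ v ∈ range (N + 2), d v * momL1N p N b ((N + l - v) / p + k) ((N + l - v) % p + 1))
    {n : ℕ} (hn : N + 2 ≤ n) :
    momSeq p N b n = ∑ w ∈ range (N + 2), d w * momSeq p N b (n - 1 - w) := by
  obtain ⟨k, l, hl, hlp, rfl⟩ : ∃ k l, 1 ≤ l ∧ l ≤ p ∧ n = N + 1 + l + p * k :=
    ⟨(n - (N + 2)) / p, (n - (N + 2)) % p + 1, by omega,
      by have := Nat.mod_lt (n - (N + 2)) hp; omega,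
      by have := Nat.div_add_mod (n - (N + 2)) p; omega⟩
  rw [← momL1N_div_add hp, hrel k l hl hlp]
  refine sum_congr rfl fun w hw => ?_
  rw [momL1N_div_add hp]
  congr 2
  have := mem_range.mp hw
  omega

theorem FRC_D_first_integrals_general (p N : ℕ) (hp : 1 ≤ p) (hN : 2 * p - 1 ≤ N)
    (I : Set ℝ) (hI : I.OrdConnected)
    (a : ℤ → ℝ → ℂ)
    (haout : ∀ l : ℤ, l < 0 ∨ (N : ℤ) < l → ∀ t : ℝ, a l t = 0)
    (haode : ∀ i : ℤ, 0 ≤ i → i ≤ (N : ℤ) → ∀ t ∈ I, HasDerivWithinAt (a i)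
      (a i t * (∏ j ∈ Finset.Icc 1 p, a (i + (j : ℤ)) t -
        ∏ j ∈ Finset.Icc 1 p, a (i - (j : ℤ)) t)) I t)
    (D : ℕ → ℝ → ℂ)
    (hDdiff : ∀ v, v ≤ N + 1 → ∀ t ∈ I, DifferentiableWithinAt ℝ (D v) I t)
    (hDrel : ∀ k : ℕ, ∀ l, 1 ≤ l → l ≤ p → ∀ t ∈ I,
      momL1N p N (fun n : ℕ => a (n : ℤ) t) ((N + 1 + l) / p + k) ((N + 1 + l) % p + 1) =
        ∑ v ∈ Finset.range (N + 2), D v t *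
          momL1N p N (fun n : ℕ => a (n : ℤ) t) ((N + l - v) / p + k) ((N + l - v) % p + 1))
    (hΔ : ∀ t ∈ I, Matrix.det (Matrix.of fun i j : Fin (N + 2) =>
        momL1N p N (fun n : ℕ => a (n : ℤ) t) ((i : ℕ) / p + (j : ℕ)) ((i : ℕ) % p + 1)) ≠ 0) :
    ∀ v, v ≤ N + 1 → ∀ t ∈ I, ∀ s ∈ I, D v t = D v s := by
  intro v hv t ht s hs
  have hpN : p ≤ N := by omega
  have ha : IsBogoyavlenskyFlow p N I a := ⟨haout, haode⟩
  refine hI.eq_of_hasDerivWithinAt_zero (fun x hx hu => ?_) ht hs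
  have hD : ∀ w < N + 2, HasDerivWithinAt (D w) (derivWithin (D w) I x) I x := fun w hw =>
    (hDdiff w (by omega) x hx).hasDerivWithinAt
  have hdet : (of fun i j : Fin (N + 2) =>
      momSeq p N (fun n : ℕ => a n x) (i + p * j)).det ≠ 0 := by
    simpa only [momL1N_div_add hp] using hΔ x hx
  have hderiv_zero : derivWithin (D v) I x = 0 :=
    eq_zero_of_sum_mul_eq_zero_of_det_ne_zero hdet (fun n hn =>
      sum_mul_eq_zero_of_hasDerivWithinAt_of_recurrence hx hu
        (fun t ht n hn => momSeq_eq_sum_of_momL1N_eq_sum hp (hDrel · · · · t ht) hn)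
        (ha.hasDerivWithinAt_momSeq hp hpN hx) hD hn) (by omega)
  simpa only [hderiv_zero] using hD v (by omega)

/-- The finite rank coefficients `D_0, …, D_{N+1}` are first integrals of the finite
Bogoyavlensky lattice `a_i' = a_i (∏_{j=1}^p a_{i+j} − ∏_{j=1}^p a_{i−j})`. -/
theorem FRC_D_first_integrals (p N : ℕ) (hp : 1 ≤ p) (hN : 2 * p - 1 ≤ N)
    (I : Set ℝ) (hI : I.OrdConnected)
    (a : ℤ → ℝ → ℂ)
    (haout : ∀ l : ℤ, l < 0 ∨ (N : ℤ) < l → ∀ t : ℝ, a l t = 0)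
    (hane : ∀ i : ℤ, 0 ≤ i → i ≤ (N : ℤ) → ∀ t ∈ I, a i t ≠ 0)
    (haode : ∀ i : ℤ, 0 ≤ i → i ≤ (N : ℤ) → ∀ t ∈ I, HasDerivWithinAt (a i)
      (a i t * (∏ j ∈ Finset.Icc 1 p, a (i + (j : ℤ)) t -
        ∏ j ∈ Finset.Icc 1 p, a (i - (j : ℤ)) t)) I t)
    (D : ℕ → ℝ → ℂ)
    (hDdiff : ∀ v, v ≤ N + 1 → ∀ t ∈ I, DifferentiableWithinAt ℝ (D v) I t)
    (hDrel : ∀ k : ℕ, ∀ l, 1 ≤ l → l ≤ p → ∀ t ∈ I,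
      momL1N p N (fun n : ℕ => a (n : ℤ) t) ((N + 1 + l) / p + k) ((N + 1 + l) % p + 1) =
        ∑ v ∈ Finset.range (N + 2), D v t *
          momL1N p N (fun n : ℕ => a (n : ℤ) t) ((N + l - v) / p + k) ((N + l - v) % p + 1))
    (hΔ : ∀ t ∈ I, Matrix.det (Matrix.of fun i j : Fin (N + 2) =>
        momL1N p N (fun n : ℕ => a (n : ℤ) t) ((i : ℕ) / p + (j : ℕ)) ((i : ℕ) % p + 1)) ≠ 0) :
    ∀ v, v ≤ N + 1 → ∀ t ∈ I, ∀ s ∈ I, D v t = D v s :=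
  FRC_D_first_integrals_general p N hp hN I hI a haout haode D hDdiff hDrel hΔ
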